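/- Let p be a prime, let R be a commutative ring of characteristic p, let m ≥ 2, and let ∂ = (∂_n)_{0 ≤ n < p^m} be a multiplicatively iterative m-truncated HS-derivation (a G_m[m]-derivation) on R. Let 0 ≤ i ≤ m − 2 and suppose x ∈ R satisfies ∂_1(x) = x and ∂_{p^j}(x) = 0 for all j with 1 ≤ j ≤ i. For any y ∈ R set x' := y^{p^{i+1}}·x − ∂_{p^{i+1}}^{(p−1)}(y^{p^{i+1}}·x). Then ∂_1(x') = x' and ∂_{p^j}(x') = 0 for all j with 1 ≤ j ≤ i + 1. -/

import Mathlib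

/-!
Write `q = p ^ (i + 1)` and `z = y ^ q * x`, so that `x' = z - D_q^{p-1} z`.

Comparing coefficients of the generating polynomials `∑ D_n(r) X^n` modulo `X ^ p ^ m`, the
Frobenius gives `D_n (y ^ q * x) = y ^ q * D_n x` for `n < q`; and all `D_n` commute, because the
iterativity rule is symmetric in `i` and `j`. This carries `D_1 x = x` and `D_{p^j} x = 0`
(`j ≤ i`) over to `x'`.

For `j = i + 1` it suffices that `T = D_q` satisfies `T^p = T`. Put `E_k = D_{qk} w`. By Lucas'
theorem, the iterativity rule for `D_q ∘ D_{qk}` reduces modulo `p` to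
`T E_k = k E_k + (k + 1) E_{k+1}`. Hence `∏_{a<p} (T - a) E_0 = p! E_p = 0`, and
`∏_{a<p} (X - a) ≡ X ^ p - X` modulo `p`.
-/

open Finset Function

/-- `D` is an `m`-truncated HS-derivation on `R` (for the prime `p`):
only the maps `D n` for `n < p ^ m` are relevant. -/
def IsTruncHSDeriv (p m : ℕ) {R : Type*} [CommRing R] (D : ℕ → R → R) : Prop :=
  (∀ n, n < p ^ m → ∀ x y, D n (x + y) = D n x + D n y) ∧
  (∀ x, D 0 x = x) ∧
  (∀ n, n < p ^ m → ∀ x y, D n (x * y) = ∑ ij ∈ Finset.HasAntidiagonal.antidiagonal n, D ij.1 x * D ij.2 y)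

/-- The coefficient `n! / ((n-i)!·(n-j)!·(i+j-n)!)` appearing in the multiplicative
iterativity rule. -/
def gmCoeff (i j n : ℕ) : ℕ :=
  n.factorial / ((n - i).factorial * ((n - j).factorial * (i + j - n).factorial))

/-- `D` is a multiplicatively iterative `m`-truncated HS-derivation
(a `G_m[m]`-derivation). -/
def IsGmIterativeTrunc (p m : ℕ) {R : Type*} [CommRing R] (D : ℕ → R → R) : Prop :=
  ∀ i j : ℕ, i < p ^ m → j < p ^ m → ∀ x,
    D j (D i x) = ∑ n ∈ Finset.Icc (max i j) (min (i + j) (p ^ m - 1)), gmCoeff i j n • D n x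

open Polynomial

theorem descPochhammer_zmod_eq_X_pow_sub_X (p : ℕ) [Fact p.Prime] :
    descPochhammer (ZMod p) p = X ^ p - X := by
  have hp := (Fact.out : p.Prime)
  rw [← sub_eq_zero]
  refine eq_zero_of_natDegree_lt_card_of_eval_eq_zero _ (f := id) injective_id (fun a => ?_) ?_
  · rw [id, eval_sub, ← ZMod.natCast_zmod_val a,
      descPochhammer_eval_coe_nat_of_lt (ZMod.val_lt a)]
    simp [ZMod.pow_card]
  · rw [ZMod.card]
    exact IsMonicOfDegree.natDegree_sub_lt hp.ne_zero
      ⟨descPochhammer_natDegree _ p, monic_descPochhammer _ p⟩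
      ((isMonicOfDegree_X_pow (R := ZMod p) p).sub (natDegree_X_le.trans_lt hp.one_lt))

theorem C_dvd_descPochhammer_sub_X_pow_sub_X (p : ℕ) [Fact p.Prime] :
    C (p : ℤ) ∣ descPochhammer ℤ p - (X ^ p - X) := by
  refine (C_dvd_iff_dvd_coeff _ _).mpr fun n => ?_
  rw [← ZMod.intCast_zmod_eq_zero_iff_dvd, ← eq_intCast (Int.castRingHom (ZMod p)),
    ← coeff_map, Polynomial.map_sub, descPochhammer_map, descPochhammer_zmod_eq_X_pow_sub_X,
    Polynomial.map_sub, Polynomial.map_pow, map_X, sub_self, coeff_zero]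

namespace Module.End

variable {M : Type*} [AddCommGroup M] {p : ℕ} (T : Module.End ℤ M) {E : ℕ → M}

theorem aeval_descPochhammer_apply (hE : ∀ k < p, T (E k) = k • E k + (k + 1) • E (k + 1))
    {k : ℕ} (hk : k ≤ p) : aeval T (descPochhammer ℤ k) (E 0) = k.factorial • E k := by
  induction k with
  | zero => simp
  | succ k ih =>
    rw [descPochhammer_succ_right, mul_comm, map_mul, Module.End.mul_apply, ih (by omega),
      map_nsmul, map_sub, aeval_X, map_natCast, LinearMap.sub_apply, natCast_apply,
      hE k (by omega), add_sub_cancel_left, Nat.factorial_succ, mul_comm, mul_smul]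

theorem pow_prime_apply_eq_apply (hp : p.Prime) (hM : ∀ x : M, p • x = 0)
    (hE : ∀ k < p, T (E k) = k • E k + (k + 1) • E (k + 1)) : (T ^ p) (E 0) = T (E 0) := by
  have := Fact.mk hp
  obtain ⟨Q, hQ⟩ := C_dvd_descPochhammer_sub_X_pow_sub_X p
  have hfac : p.factorial • E p = 0 := by
    obtain ⟨c, hc⟩ := Nat.dvd_factorial hp.pos le_rfl
    rw [hc, mul_comm, mul_smul, hM, smul_zero]
  have hpoch := aeval_descPochhammer_apply T hE le_rfl
  rw [hfac, eq_add_of_sub_eq' hQ, map_add, map_sub, map_mul, aeval_X_pow, aeval_X, aeval_C,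
    algebraMap_int_eq, eq_intCast, Int.cast_natCast, LinearMap.add_apply, LinearMap.sub_apply,
    Module.End.mul_apply, natCast_apply, hM, add_zero, sub_eq_zero] at hpoch
  exact hpoch

end Module.End

theorem CharP.nsmul_eq_nsmul_of_modEq {R : Type*} [Ring R] {p : ℕ} [CharP R p] {a b : ℕ}
    (h : a ≡ b [MOD p]) (r : R) : a • r = b • r := by
  rw [nsmul_eq_mul, nsmul_eq_mul, (CharP.natCast_eq_natCast R p).mpr h]

section GmCoeff

theorem gmCoeff_comm (i j n : ℕ) : gmCoeff i j n = gmCoeff j i n := by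
  rw [gmCoeff, gmCoeff, mul_left_comm, add_comm]

theorem gmCoeff_eq_choose_mul_choose {i j n : ℕ} (hi : i ≤ n) (hj : j ≤ n)
    (hn : n ≤ i + j) : gmCoeff i j n = n.choose j * j.choose (n - i) := by
  refine Nat.div_eq_of_eq_mul_left (by positivity) ?_
  rw [← Nat.choose_mul_factorial_mul_factorial hj,
    ← Nat.choose_mul_factorial_mul_factorial (show n - i ≤ j by omega),
    show j - (n - i) = i + j - n by omega]
  ring

variable {p : ℕ} [Fact p.Prime] (s : ℕ) {k : ℕ}

theorem gmCoeff_pow_mul_self_modEq (hk : 0 < k) :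
    gmCoeff (p ^ s * k) (p ^ s) (p ^ s * k) ≡ k [MOD p] := by
  rw [gmCoeff_eq_choose_mul_choose le_rfl (Nat.le_mul_of_pos_right _ hk) (by omega),
    Nat.sub_self, Nat.choose_zero_right, mul_one]
  simpa using Choose.choose_pow_mul_pow_mul_modEq_choose_nat (p := p) (k := s) (a := k) (b := 1)

theorem gmCoeff_pow_mul_succ_modEq :
    gmCoeff (p ^ s * k) (p ^ s) (p ^ s * (k + 1)) ≡ k + 1 [MOD p] := by
  rw [mul_add_one, gmCoeff_eq_choose_mul_choose (by omega) (by omega) le_rfl,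
    Nat.add_sub_cancel_left, Nat.choose_self, mul_one, ← mul_add_one]
  simpa using
    Choose.choose_pow_mul_pow_mul_modEq_choose_nat (p := p) (k := s) (a := k + 1) (b := 1)

theorem prime_dvd_gmCoeff_pow_mul {n : ℕ} (hk : 0 < k) (h₁ : p ^ s * k < n)
    (h₂ : n < p ^ s * k + p ^ s) : p ∣ gmCoeff (p ^ s * k) (p ^ s) n := by
  have hle : p ^ s ≤ p ^ s * k := Nat.le_mul_of_pos_right _ hk
  rw [gmCoeff_eq_choose_mul_choose h₁.le (by omega) h₂.le]
  exact ((Fact.out : p.Prime).dvd_choose_pow (by omega) (by omega)).mul_left _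

end GmCoeff

noncomputable def hsPoly {R : Type*} [Semiring R] (D : ℕ → R → R) (N : ℕ) (r : R) : R[X] :=
  ∑ n ∈ range N, C (D n r) * X ^ n

theorem coeff_hsPoly {R : Type*} [Semiring R] (D : ℕ → R → R) {N k : ℕ} (hk : k < N)
    (r : R) : (hsPoly D N r).coeff k = D k r := by
  simp [hsPoly, coeff_C_mul, coeff_X_pow, hk]

namespace IsTruncHSDeriv

variable {p m : ℕ} {R : Type*} [CommRing R] {D : ℕ → R → R}

def toAddMonoidHom (hD : IsTruncHSDeriv p m D) {n : ℕ} (hn : n < p ^ m) : R →+ R :=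
  AddMonoidHom.mk' (D n) (hD.1 n hn)

@[simp]
theorem coe_toAddMonoidHom (hD : IsTruncHSDeriv p m D) {n : ℕ} (hn : n < p ^ m) :
    ⇑(hD.toAddMonoidHom hn) = D n :=
  rfl

theorem map_zero (hD : IsTruncHSDeriv p m D) {n : ℕ} (hn : n < p ^ m) : D n 0 = 0 :=
  _root_.map_zero (hD.toAddMonoidHom hn)

theorem map_sub (hD : IsTruncHSDeriv p m D) {n : ℕ} (hn : n < p ^ m) (a b : R) :
    D n (a - b) = D n a - D n b :=
  _root_.map_sub (hD.toAddMonoidHom hn) a b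

theorem X_pow_dvd_hsPoly_mul_sub (hD : IsTruncHSDeriv p m D) (a b : R) :
    X ^ p ^ m ∣ hsPoly D (p ^ m) (a * b) - hsPoly D (p ^ m) a * hsPoly D (p ^ m) b := by
  refine X_pow_dvd_iff.mpr fun k hk => ?_
  rw [coeff_sub, coeff_mul, coeff_hsPoly D hk, hD.2.2 k hk, sub_eq_zero]
  refine sum_congr rfl fun ij hij => ?_
  have := mem_antidiagonal.mp hij
  rw [coeff_hsPoly D (by omega), coeff_hsPoly D (by omega)]

theorem X_pow_dvd_hsPoly_pow_sub (hD : IsTruncHSDeriv p m D) (w : R) {e : ℕ} (he : 1 ≤ e) :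
    X ^ p ^ m ∣ hsPoly D (p ^ m) (w ^ e) - hsPoly D (p ^ m) w ^ e := by
  induction e, he using Nat.le_induction with
  | base => simp
  | succ e _ ih =>
    have key : hsPoly D (p ^ m) (w ^ e * w) - hsPoly D (p ^ m) w ^ (e + 1) =
        (hsPoly D (p ^ m) (w ^ e * w) - hsPoly D (p ^ m) (w ^ e) * hsPoly D (p ^ m) w) +
          (hsPoly D (p ^ m) (w ^ e) - hsPoly D (p ^ m) w ^ e) * hsPoly D (p ^ m) w := by
      ring
    rw [pow_succ w, key]
    exact dvd_add (hD.X_pow_dvd_hsPoly_mul_sub _ _) (ih.mul_right _)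

theorem apply_pow_char_pow_eq_zero (hD : IsTruncHSDeriv p m D) (hp : p.Prime) [CharP R p]
    {s : ℕ} (hs : s ≤ m) (w : R) {a : ℕ} (ha₀ : 0 < a) (ha : a < p ^ s) :
    D a (w ^ p ^ s) = 0 := by
  have := Fact.mk hp
  have ham : a < p ^ m := ha.trans_le (Nat.pow_le_pow_right hp.pos hs)
  have hcoeff := X_pow_dvd_iff.mp
    (hD.X_pow_dvd_hsPoly_pow_sub w (Nat.one_le_pow s p hp.pos)) a ham
  rw [coeff_sub, sub_eq_zero, coeff_hsPoly D ham, hsPoly, sum_pow_char_pow,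
    finsetSum_coeff] at hcoeff
  rw [hcoeff]
  refine sum_eq_zero fun n _ => ?_
  rw [mul_pow, ← C_pow, ← pow_mul, coeff_C_mul, coeff_X_pow, if_neg, mul_zero]
  rintro rfl
  rcases Nat.eq_zero_or_pos n with rfl | hn
  · omega
  · exact absurd ha (not_lt.mpr (Nat.le_mul_of_pos_left _ hn))

theorem apply_pow_char_pow_mul (hD : IsTruncHSDeriv p m D) (hp : p.Prime) [CharP R p]
    {s : ℕ} (hs : s ≤ m) (w x : R) {n : ℕ} (hn : n < p ^ s) :
    D n (w ^ p ^ s * x) = w ^ p ^ s * D n x := by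
  rw [hD.2.2 n (hn.trans_le (Nat.pow_le_pow_right hp.pos hs)),
    sum_eq_single_of_mem (0, n) (mem_antidiagonal.mpr (zero_add n)), hD.2.1]
  rintro ⟨a, b⟩ hab hne
  have := mem_antidiagonal.mp hab
  rw [hD.apply_pow_char_pow_eq_zero hp hs w (by grind) (by omega), zero_mul]

end IsTruncHSDeriv

namespace IsGmIterativeTrunc

variable {p m : ℕ} {R : Type*} [CommRing R] {D : ℕ → R → R}

theorem commute (hiter : IsGmIterativeTrunc p m D) {a b : ℕ} (ha : a < p ^ m) (hb : b < p ^ m) :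
    Function.Commute (D a) (D b) := by
  intro w
  rw [hiter b a hb ha w, hiter a b ha hb w, max_comm, add_comm]
  simp_rw [gmCoeff_comm b a]

theorem apply_sub_iterate_apply (hiter : IsGmIterativeTrunc p m D) (hD : IsTruncHSDeriv p m D)
    {n q : ℕ} (hn : n < p ^ m) (hq : q < p ^ m) (t : ℕ) (z : R) :
    D n (z - (D q)^[t] z) = D n z - (D q)^[t] (D n z) := by
  rw [hD.map_sub hn, ((hiter.commute hn hq).iterate_right t).eq]

theorem apply_pow_apply_pow_mul (hiter : IsGmIterativeTrunc p m D) (hD : IsTruncHSDeriv p m D)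
    (hp : p.Prime) [CharP R p] {s : ℕ} (hs : s + 1 ≤ m) {k : ℕ} (hk : k < p) (w : R) :
    D (p ^ s) (D (p ^ s * k) w) = k • D (p ^ s * k) w + (k + 1) • D (p ^ s * (k + 1)) w := by
  have := Fact.mk hp
  rcases Nat.eq_zero_or_pos k with rfl | hk₀
  · simp [hD.2.1]
  have hq : 0 < p ^ s := pow_pos hp.pos s
  have hqp : p ^ s * p ≤ p ^ m := by rw [← pow_succ]; exact Nat.pow_le_pow_right hp.pos hs
  have hqk : p ^ s ≤ p ^ s * k := Nat.le_mul_of_pos_right _ hk₀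
  have hqk₁ : p ^ s * (k + 1) ≤ p ^ m := (Nat.mul_le_mul_left _ hk).trans hqp
  have hsucc : p ^ s * (k + 1) = p ^ s * k + p ^ s := mul_add_one (p ^ s) k
  rw [hiter (p ^ s * k) (p ^ s) (by omega) (by omega) w, max_eq_left hqk, ← hsucc,
    sum_subset (Icc_subset_Icc_right (min_le_left _ _)),
    sum_eq_add_of_mem (p ^ s * k) (p ^ s * (k + 1)) (by simp; omega) (by simp; omega) (by omega)]
  · rw [CharP.nsmul_eq_nsmul_of_modEq (gmCoeff_pow_mul_self_modEq s hk₀),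
      CharP.nsmul_eq_nsmul_of_modEq (gmCoeff_pow_mul_succ_modEq s)]
  · intro n hn _
    rw [mem_Icc] at hn
    rw [CharP.nsmul_eq_nsmul_of_modEq (Nat.modEq_zero_iff_dvd.mpr
      (prime_dvd_gmCoeff_pow_mul s hk₀ (by omega) (by omega))), zero_smul]
  -- a term cut off by the truncation `p ^ m - 1` only occurs for `k + 1 = p`, where it vanishes
  · intro n hn hn'
    simp only [mem_Icc, le_min_iff, not_and, not_le] at hn hn'
    have hn_eq : n = p ^ s * (k + 1) := by omega
    have hkp : k + 1 = p := le_antisymm hk (Nat.le_of_mul_le_mul_left (by omega) hq)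
    rw [hn_eq, CharP.nsmul_eq_nsmul_of_modEq (gmCoeff_pow_mul_succ_modEq s), hkp,
      CharP.nsmul_eq_nsmul_of_modEq (Nat.modEq_zero_iff_dvd.mpr dvd_rfl), zero_smul]

theorem iterate_pow_prime_apply (hiter : IsGmIterativeTrunc p m D) (hD : IsTruncHSDeriv p m D)
    (hp : p.Prime) [CharP R p] {s : ℕ} (hs : s + 1 ≤ m) (w : R) :
    (D (p ^ s))^[p] w = D (p ^ s) w := by
  have hq : p ^ s < p ^ m := Nat.pow_lt_pow_right hp.one_lt hs
  have := Module.End.pow_prime_apply_eq_apply (hD.toAddMonoidHom hq).toIntLinearMap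
    (E := fun k => D (p ^ s * k) w) hp (fun r => by rw [nsmul_eq_mul, CharP.cast_eq_zero, zero_mul])
    (fun k hk => hiter.apply_pow_apply_pow_mul hD hp hs hk w)
  simpa [Module.End.pow_apply, hD.2.1] using this

end IsGmIterativeTrunc

/-- Propagating a multiplicative canonical element one step up: if `D 1 x = x` and
`D (p^j) x = 0` for `1 ≤ j ≤ i`, then
`x' = y^{p^{i+1}}·x − (D (p^{i+1}))^{(p-1)}(y^{p^{i+1}}·x)` satisfies `D 1 x' = x'` and
`D (p^j) x' = 0` for `1 ≤ j ≤ i + 1`. -/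
theorem gm_canonical_step (p : ℕ) (hp : p.Prime) (m : ℕ) (hm : 2 ≤ m)
    (R : Type*) [CommRing R] [CharP R p]
    (D : ℕ → R → R)
    (hD : IsTruncHSDeriv p m D)
    (hiter : IsGmIterativeTrunc p m D)
    (i : ℕ) (hi : i ≤ m - 2)
    (x : R) (hx1 : D 1 x = x) (hxp : ∀ j : ℕ, 1 ≤ j → j ≤ i → D (p ^ j) x = 0)
    (y : R) :
    D 1 (y ^ p ^ (i + 1) * x - (D (p ^ (i + 1)))^[p - 1] (y ^ p ^ (i + 1) * x)) =
        y ^ p ^ (i + 1) * x - (D (p ^ (i + 1)))^[p - 1] (y ^ p ^ (i + 1) * x) ∧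
      ∀ j : ℕ, 1 ≤ j → j ≤ i + 1 →
        D (p ^ j) (y ^ p ^ (i + 1) * x - (D (p ^ (i + 1)))^[p - 1] (y ^ p ^ (i + 1) * x)) = 0 := by
  have hs : i + 1 + 1 ≤ m := by omega
  have hq : p ^ (i + 1) < p ^ m := Nat.pow_lt_pow_right hp.one_lt hs
  have hpow_lt {j : ℕ} (hj : j ≤ i) : p ^ j < p ^ (i + 1) :=
    Nat.pow_lt_pow_right hp.one_lt (by omega)
  have hmul {n : ℕ} (hn : n < p ^ (i + 1)) :
      D n (y ^ p ^ (i + 1) * x) = y ^ p ^ (i + 1) * D n x :=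
    hD.apply_pow_char_pow_mul hp (by omega) y x hn
  refine ⟨?_, fun j hj₁ hj₂ => ?_⟩
  · have h₁ : 1 < p ^ (i + 1) := Nat.one_lt_pow (by omega) hp.one_lt
    rw [hiter.apply_sub_iterate_apply hD (h₁.trans hq) hq, hmul h₁, hx1]
  rcases hj₂.lt_or_eq with hj | rfl
  · rw [hiter.apply_sub_iterate_apply hD ((hpow_lt (by omega)).trans hq) hq,
      hmul (hpow_lt (by omega)), hxp j hj₁ (by omega), mul_zero,
      iterate_fixed (hD.map_zero hq), sub_zero]
  · rw [hiter.apply_sub_iterate_apply hD hq hq, ← iterate_succ_apply, Nat.succ_eq_add_one,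
      Nat.sub_add_cancel hp.one_le, hiter.iterate_pow_prime_apply hD hp hs, sub_self]
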